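/- arXiv:1805.03603 — 6 statements merged into one kernel-verified Lean document; each statement's English description precedes it below -/
import Mathlib

section
/- With P_m and Q_m defined by the recurrences P_0 = 1, P_1(a) = a, P_m(A_1,...,A_m) = P_{m-1}(A_1,...,A_{m-1})A_m + P_{m-2}(A_1,...,A_{m-2}) and Q_0 = 1, Q_1(a) = -a, Q_m(A_1,...,A_m) = -Q_{m-1}(A_2,...,A_m)A_1 + Q_{m-2}(A_3,...,A_m), the following block matrix identity holds for all A_1,...,A_m ∈ Mat_n(k): the block matrix (1, 0; P_{m-1}(A_1,...,A_{m-1}), P_m(A_1,...,A_m)) equals the product of (Q_m(A_1,...,A_m), Q_{m-1}(A_2,...,A_m); 0, 1) with M_1·M_2·...·M_m, where M_j = (0, 1; 1, A_j) in block form. -/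
open Matrix

/-- Noncommutative continuant polynomial, head recursion on the reversed list. -/
def Pr {R : Type*} [Ring R] : List R → R
  | [] => 1
  | [a] => a
  | a :: b :: l => Pr (b :: l) * a + Pr l

/-- `Pc [A₁, …, Aₘ] = Pₘ(A₁, …, Aₘ)`, with `P₀ = 1`, `P₁(a) = a`,
`Pₘ = Pₘ₋₁(A₁,…,Aₘ₋₁)·Aₘ + Pₘ₋₂(A₁,…,Aₘ₋₂)`. -/
def Pc {R : Type*} [Ring R] (l : List R) : R := Pr l.reverse

/-- `Qc [A₁, …, Aₘ] = Qₘ(A₁, …, Aₘ)`, with `Q₀ = 1`, `Q₁(a) = -a`,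
`Qₘ = -Qₘ₋₁(A₂,…,Aₘ)·A₁ + Qₘ₋₂(A₃,…,Aₘ)`. -/
def Qc {R : Type*} [Ring R] : List R → R
  | [] => 1
  | [a] => -a
  | a :: b :: l => -(Qc (b :: l)) * a + Qc l

namespace StmtAux

variable {R : Type*} [Ring R]

lemma Pr_cons (x : R) {s : List R} (hs : s ≠ []) :
    Pr (x :: s) = Pr s * x + Pr s.tail := by
  cases s with
  | nil => simp at hs
  | cons b l => rfl

def Pd : List R → R
  | [] => 0
  | s@(_ :: _) => Pr s.dropLast

lemma Pd_ne_nil {s : List R} (hs : s ≠ []) : Pd s = Pr s.dropLast := by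
  cases s with
  | nil => simp at hs
  | cons b l => rfl

lemma key : ∀ (s : List R) (a : R), Pr (s ++ [a]) = a * Pr s + Pd s
  | [], a => by simp [Pr, Pd]
  | [x], a => by simp [Pr, Pd]
  | x :: y :: t, a => by
    have h1 := key (y :: t) a
    have h2 := key t a
    have e1 : Pr ((x :: y :: t) ++ [a]) = Pr ((y :: t) ++ [a]) * x + Pr (t ++ [a]) := by
      rw [List.cons_append, Pr_cons x (by simp)]
      simp
    rw [e1, h1, h2]
    cases t with
    | nil => simp [Pr, Pd]; noncomm_ring
    | cons z u =>
      rw [Pd_ne_nil (s := y :: z :: u) (by simp),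
          Pd_ne_nil (s := z :: u) (by simp),
          Pd_ne_nil (s := x :: y :: z :: u) (by simp)]
      have e2 : (x :: y :: z :: u).dropLast = x :: (y :: z :: u).dropLast := by simp
      rw [e2, Pr_cons x (by simp)]
      rw [Pr_cons x (s := (y :: z :: u).dropLast) (by simp)]
      have e3 : ((y :: z :: u).dropLast).tail = (z :: u).dropLast := by simp
      rw [e3]
      simp only [List.tail_cons]
      noncomm_ring

lemma Pc_cons (a : R) {m : List R} (hm : m ≠ []) :
    Pc (a :: m) = a * Pc m + Pc m.tail := by
  unfold Pc
  rw [List.reverse_cons, key]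
  congr 1
  cases m with
  | nil => simp at hm
  | cons b t =>
    rw [Pd_ne_nil (by simp)]
    simp [List.reverse_cons, List.dropLast_concat]

end StmtAux

namespace StmtAux

variable {R : Type*} [Ring R]

def TL : List R → R
  | _ :: b :: t => Pc ((b :: t).dropLast)
  | _ => 0

lemma QP : ∀ (a : R) (t : List R), Qc (a :: t) * Pc t + Qc t * Pc (a :: t) = 0
  | a, [] => by simp [Qc, Pc, Pr]
  | a, b :: t => by
    have ih := QP b t
    have hq : Qc (a :: b :: t) = -(Qc (b :: t)) * a + Qc t := rfl
    rw [hq, Pc_cons a (by simp)]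
    simp only [List.tail_cons]
    have h : (-(Qc (b :: t)) * a + Qc t) * Pc (b :: t)
        + Qc (b :: t) * (a * Pc (b :: t) + Pc t)
        = Qc (b :: t) * Pc t + Qc t * Pc (b :: t) := by noncomm_ring
    rw [h, ih]

lemma QT : ∀ (a : R) (t : List R),
    Qc (a :: t) * TL (a :: t) + Qc t * Pc ((a :: t).dropLast) = 1
  | a, [] => by simp [Qc, TL, Pc, Pr]
  | a, [b] => by
    show Qc [a, b] * TL [a, b] + Qc [b] * Pc [a] = 1
    have : Qc [a, b] = -(Qc [b]) * a + Qc [] := rfl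
    rw [this]
    simp [Qc, TL, Pc, Pr]
  | a, b :: c :: u => by
    have ih := QT b (c :: u)
    have hq : Qc (a :: b :: c :: u) = -(Qc (b :: c :: u)) * a + Qc (c :: u) := rfl
    have hTL : TL (a :: b :: c :: u) = Pc ((b :: c :: u).dropLast) := rfl
    have hTL2 : TL (b :: c :: u) = Pc ((c :: u).dropLast) := rfl
    have hd : (a :: b :: c :: u).dropLast = a :: (b :: c :: u).dropLast := by simp
    have hd2 : (b :: c :: u).dropLast = b :: (c :: u).dropLast := by simp
    rw [hq, hTL, hd, Pc_cons a (by rw [hd2]; simp)]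
    rw [hTL2, hd2] at ih
    have ht : (b :: (c :: u).dropLast).tail = (c :: u).dropLast := rfl
    rw [hd2, ht]
    have h : (-(Qc (b :: c :: u)) * a + Qc (c :: u)) * Pc (b :: (c :: u).dropLast)
        + Qc (b :: c :: u) * (a * Pc (b :: (c :: u).dropLast) + Pc ((c :: u).dropLast))
        = Qc (b :: c :: u) * Pc ((c :: u).dropLast)
          + Qc (c :: u) * Pc (b :: (c :: u).dropLast) := by noncomm_ring
    rw [h, ih]

lemma prodB {k : Type*} [Field k] {n : ℕ} :
    ∀ (a : Matrix (Fin n) (Fin n) k) (t : List (Matrix (Fin n) (Fin n) k)),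
    ((a :: t).map fun x => fromBlocks (0 : Matrix (Fin n) (Fin n) k) 1 1 x).prod =
      fromBlocks (TL (a :: t)) (Pc t) (Pc ((a :: t).dropLast)) (Pc (a :: t))
  | a, [] => by simp [TL, Pc, Pr]
  | a, b :: t => by
    have ih := prodB b t
    rw [List.map_cons, List.prod_cons, ih, Matrix.fromBlocks_multiply]
    simp only [zero_mul, one_mul, mul_zero, zero_add, add_zero]
    have h1 : TL (a :: b :: t) = Pc ((b :: t).dropLast) := rfl
    have h3 : Pc (a :: b :: t) = Pc t + a * Pc (b :: t) := by
      rw [Pc_cons a (by simp), add_comm]; rfl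
    have h4 : Pc ((a :: b :: t).dropLast)
        = TL (b :: t) + a * Pc ((b :: t).dropLast) := by
      cases t with
      | nil => simp [TL, Pc, Pr]
      | cons c u =>
        have h2 : (a :: b :: c :: u).dropLast = a :: (b :: c :: u).dropLast := by simp
        rw [h2, Pc_cons a (m := (b :: c :: u).dropLast) (by simp)]
        have ht : ((b :: c :: u).dropLast).tail = (c :: u).dropLast := by simp
        rw [ht, add_comm]
        rfl
    rw [h1, h3, h4]
end StmtAux

open StmtAux in
/-- The block matrix `(1, 0; Pₘ₋₁(A₁,…,Aₘ₋₁), Pₘ(A₁,…,Aₘ))` equals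
`(Qₘ(A₁,…,Aₘ), Qₘ₋₁(A₂,…,Aₘ); 0, 1) · M₁ · M₂ ⋯ Mₘ` with `Mⱼ = (0, 1; 1, Aⱼ)`. -/
theorem stmt_2 {k : Type*} [Field k] {n : ℕ}
    (l : List (Matrix (Fin n) (Fin n) k)) (hl : l ≠ []) :
    fromBlocks (1 : Matrix (Fin n) (Fin n) k) 0 (Pc l.dropLast) (Pc l) =
      fromBlocks (Qc l) (Qc l.tail) (0 : Matrix (Fin n) (Fin n) k) 1 *
        (l.map fun a => fromBlocks (0 : Matrix (Fin n) (Fin n) k) 1 1 a).prod := by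
  cases l with
  | nil => exact absurd rfl hl
  | cons a t =>
    rw [prodB a t, Matrix.fromBlocks_multiply]
    simp only [List.tail_cons, zero_mul, one_mul, zero_add, add_zero]
    rw [QT a t, QP a t]
end

section
/- Let A_1,...,A_m ∈ Mat_n(k) and define P_m, Q_m by the recurrences P_0 = 1, P_1(a) = a, P_m(A_1,...,A_m) = P_{m-1}(A_1,...,A_{m-1})A_m + P_{m-2}(A_1,...,A_{m-2}), and Q_0 = 1, Q_1(a) = -a, Q_m(A_1,...,A_m) = -Q_{m-1}(A_2,...,A_m)A_1 + Q_{m-2}(A_3,...,A_m). Then det(P_m(A_1,...,A_m)) = (-1)^{mn} · det(Q_m(A_1,...,A_m)). -/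
open Matrix

theorem Qc_eq {R : Type*} [Ring R] : ∀ l : List R, Qc l = Pr (l.map (fun a => -a))
  | [] => rfl
  | [a] => rfl
  | a :: b :: t => by
      rw [show Qc (a :: b :: t) = -(Qc (b :: t)) * a + Qc t from rfl,
        Qc_eq (b :: t), Qc_eq t]
      show _ = Pr (-a :: -b :: t.map (fun a => -a))
      rw [show Pr (-a :: -b :: t.map (fun a => -a))
          = Pr (-b :: t.map (fun a => -a)) * (-a) + Pr (t.map (fun a => -a)) from rfl]
      rw [mul_neg, neg_mul, List.map_cons]

namespace SylvAux

variable {k : Type*} [CommRing k] {n : ℕ}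

/-- second continuant: `Prt l = Pr l.tail`, with `Prt [] = 0`. -/
def Prt {R : Type*} [Ring R] : List R → R
  | [] => 0
  | _ :: t => Pr t

theorem Pr_cons {R : Type*} [Ring R] (a : R) (v : List R) :
    Pr (a :: v) = Pr v * a + Prt v := by
  cases v with
  | nil => simp [Pr, Prt]
  | cons b t => rfl

theorem Prt_cons {R : Type*} [Ring R] (a : R) (v : List R) :
    Prt (a :: v) = Pr v := rfl

def Mb (a : Matrix (Fin n) (Fin n) k) : Matrix (Fin n ⊕ Fin n) (Fin n ⊕ Fin n) k :=
  fromBlocks a 1 1 0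

def J (k : Type*) [CommRing k] (n : ℕ) : Matrix (Fin n ⊕ Fin n) (Fin n ⊕ Fin n) k :=
  fromBlocks 0 1 1 0

def Pp (l : List (Matrix (Fin n) (Fin n) k)) : Matrix (Fin n ⊕ Fin n) (Fin n ⊕ Fin n) k :=
  (l.map Mb).prod

theorem Pp_nil : Pp ([] : List (Matrix (Fin n) (Fin n) k)) = 1 := rfl

theorem Pp_cons (a : Matrix (Fin n) (Fin n) k) (l : List (Matrix (Fin n) (Fin n) k)) :
    Pp (a :: l) = Mb a * Pp l := by
  simp [Pp]

theorem Pp_append (l₁ l₂ : List (Matrix (Fin n) (Fin n) k)) :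
    Pp (l₁ ++ l₂) = Pp l₁ * Pp l₂ := by
  simp [Pp]

theorem J_mul_J : J k n * J k n = 1 := by
  simp [J, fromBlocks_multiply, fromBlocks_one]

theorem Mb_mul_inv (a : Matrix (Fin n) (Fin n) k) :
    Mb a * (J k n * Mb (-a) * J k n) = 1 := by
  simp [Mb, J, fromBlocks_multiply, fromBlocks_one]

theorem Pp_mul_inv (l : List (Matrix (Fin n) (Fin n) k)) :
    Pp l * (J k n * Pp ((l.map (fun a => -a)).reverse) * J k n) = 1 := by
  induction l with
  | nil => simpa [Pp_nil] using (J_mul_J (k := k) (n := n))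
  | cons a t ih =>
      have h1 : ((a :: t).map (fun a => -a)).reverse
          = ((t.map (fun a => -a)).reverse) ++ [-a] := by simp
      have hins : ∀ (Y Z : Matrix (Fin n ⊕ Fin n) (Fin n ⊕ Fin n) k),
          (J k n * Y * J k n) * (J k n * Z * J k n) = J k n * (Y * Z) * J k n := by
        intro Y Z
        calc (J k n * Y * J k n) * (J k n * Z * J k n)
            = J k n * (Y * ((J k n * J k n) * (Z * J k n))) := by
              simp only [mul_assoc]
          _ = J k n * (Y * Z) * J k n := by rw [J_mul_J]; simp only [one_mul, mul_assoc]
      rw [Pp_cons, h1, Pp_append]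
      have h2 : Pp ([-a] : List (Matrix (Fin n) (Fin n) k)) = Mb (-a) := by
        simp [Pp, Mb]
      rw [h2, ← hins]
      calc Mb a * Pp t * (J k n * Pp ((t.map (fun a => -a)).reverse) * J k n
            * (J k n * Mb (-a) * J k n))
          = Mb a * (Pp t * (J k n * Pp ((t.map (fun a => -a)).reverse) * J k n))
            * (J k n * Mb (-a) * J k n) := by simp only [mul_assoc]
        _ = Mb a * (J k n * Mb (-a) * J k n) := by rw [ih, mul_one]
        _ = 1 := Mb_mul_inv a

theorem blocks (u : List (Matrix (Fin n) (Fin n) k)) :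
    ∃ r s, Pp u = fromBlocks (Pr u.reverse) (Prt u.reverse) r s := by
  induction u using List.reverseRecOn with
  | nil => exact ⟨0, 1, by simp [Pp_nil, Pr, Prt, fromBlocks_one]⟩
  | append_singleton u a ih =>
      obtain ⟨r, s, h⟩ := ih
      refine ⟨r * a + s, r, ?_⟩
      rw [Pp_append, h]
      have h2 : Pp ([a] : List (Matrix (Fin n) (Fin n) k)) = Mb a := by simp [Pp, Mb]
      rw [h2, Mb, fromBlocks_multiply]
      have h3 : (u ++ [a]).reverse = a :: u.reverse := by simp
      rw [h3, Pr_cons, Prt_cons]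
      simp

theorem det_J : (J k n).det = (-1 : k) ^ n := by
  have h : J k n = (fromBlocks 1 1 0 1 * fromBlocks 1 0 (-1) 1 * fromBlocks 1 1 0 1)
      * fromBlocks (-1) 0 0 1 := by
    simp [J, fromBlocks_multiply]
  rw [h, det_mul, det_mul, det_mul]
  simp [det_fromBlocks_zero₂₁, det_fromBlocks_zero₁₂, Matrix.det_neg]

theorem det_Mb (a : Matrix (Fin n) (Fin n) k) : (Mb a).det = (-1 : k) ^ n := by
  have h : Mb a = fromBlocks 1 a 0 1 * J k n := by
    simp [Mb, J, fromBlocks_multiply]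
  rw [h, det_mul, det_fromBlocks_zero₂₁, det_J]
  simp

theorem det_Pp (l : List (Matrix (Fin n) (Fin n) k)) :
    (Pp l).det = (-1 : k) ^ (l.length * n) := by
  induction l with
  | nil => simp [Pp_nil]
  | cons a t ih =>
      rw [Pp_cons, det_mul, det_Mb, ih, List.length_cons, ← pow_add]
      ring_nf

theorem jacobi {p q r s p' q' r' s' : Matrix (Fin n) (Fin n) k}
    (h : fromBlocks p q r s * fromBlocks p' q' r' s' = 1) :
    (fromBlocks p q r s).det * s'.det = p.det := by
  rw [fromBlocks_multiply, ← fromBlocks_one] at h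
  have h2 : p * q' + q * s' = 0 := by
    have h' := congrArg Matrix.toBlocks₁₂ h
    rwa [Matrix.toBlocks_fromBlocks₁₂, Matrix.toBlocks_fromBlocks₁₂] at h'
  have h4 : r * q' + s * s' = 1 := by
    have h' := congrArg Matrix.toBlocks₂₂ h
    rwa [Matrix.toBlocks_fromBlocks₂₂, Matrix.toBlocks_fromBlocks₂₂] at h' 
  have key : fromBlocks p q r s * fromBlocks 1 q' 0 s' = fromBlocks p 0 r 1 := by
    rw [fromBlocks_multiply]
    simp [h2, h4]
  have := congrArg Matrix.det key
  rw [det_mul, det_fromBlocks_zero₂₁, det_fromBlocks_zero₁₂] at this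
  simpa using this

end SylvAux


/-- Generalized Sylvester determinant identity:
`det(Pₘ(A₁,…,Aₘ)) = (-1)^(m·n) · det(Qₘ(A₁,…,Aₘ))`. -/
theorem stmt_3 {k : Type*} [Field k] {n : ℕ}
    (l : List (Matrix (Fin n) (Fin n) k)) :
    (Pc l).det = (-1 : k) ^ (l.length * n) * (Qc l).det := by
  classical
  obtain ⟨r, s, hT⟩ := SylvAux.blocks l
  set u := (l.map (fun a => -a)).reverse with hu
  obtain ⟨r₂, s₂, hU⟩ := SylvAux.blocks u
  have hrev : u.reverse = l.map (fun a => -a) := by simp [hu]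
  have hinv := SylvAux.Pp_mul_inv l
  have hJUJ : SylvAux.J k n * SylvAux.Pp u * SylvAux.J k n
      = fromBlocks s₂ r₂ (SylvAux.Prt u.reverse) (Pr u.reverse) := by
    rw [hU, SylvAux.J, fromBlocks_multiply, fromBlocks_multiply]
    simp
  rw [← hu, hJUJ, hT] at hinv
  have hj := SylvAux.jacobi hinv
  rw [← hT, SylvAux.det_Pp] at hj
  show (Pr l.reverse).det = _
  rw [← hj, hrev, ← Qc_eq l]
end

section
/- Let A_1,...,A_m ∈ Mat_n(k) with P_m defined by the recurrence P_0 = 1, P_1(a) = a, P_m(A_1,...,A_m) = P_{m-1}(A_1,...,A_{m-1})A_m + P_{m-2}(A_1,...,A_{m-2}). Then P_m(A_1,...,A_m) is invertible if and only if Q_m(A_1,...,A_m) is invertible, where Q is defined by Q_0 = 1, Q_1(a) = -a, Q_m(A_1,...,A_m) = -Q_{m-1}(A_2,...,A_m)A_1 + Q_{m-2}(A_3,...,A_m). -/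
open Matrix

section Aux

variable {R : Type*} [Ring R]

/-- Auxiliary: `Prt (a :: m) = Pr m`, `Prt [] = 0`. -/
def Prt : List R → R
  | [] => 0
  | _ :: m => Pr m

/-- Second entry of the top row of the transfer product. -/
def Pt (l : List R) : R := Prt l.reverse

/-- Auxiliary: `Qt (a :: m) = Qc m`, `Qt [] = 0`. -/
def Qt : List R → R
  | [] => 0
  | _ :: m => Qc m

lemma Pr_cons (a : R) (r : List R) : Pr (a :: r) = Pr r * a + Prt r := by
  cases r with
  | nil => simp [Pr, Prt]
  | cons b m => rfl

lemma Qc_cons (a : R) (l : List R) : Qc (a :: l) = -(Qc l) * a + Qt l := by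
  cases l with
  | nil => simp [Qc, Qt]
  | cons b m => rfl

lemma Pc_append (l : List R) (a : R) : Pc (l ++ [a]) = Pc l * a + Pt l := by
  unfold Pc Pt
  rw [List.reverse_append, List.reverse_singleton, List.singleton_append, Pr_cons]

lemma Pt_append (l : List R) (a : R) : Pt (l ++ [a]) = Pc l := by
  unfold Pc Pt
  rw [List.reverse_append, List.reverse_singleton, List.singleton_append]
  rfl

/-- Transfer matrix. -/
def Mm (a : R) : Matrix (Fin 2) (Fin 2) R := !![a, 1; 1, 0]

/-- Inverse transfer matrix. -/
def Nm (a : R) : Matrix (Fin 2) (Fin 2) R := !![0, 1; 1, -a]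

lemma Mm_mul_Nm (a : R) : Mm a * Nm a = 1 := by
  ext i j
  fin_cases i <;> fin_cases j <;>
    simp [Mm, Nm, Matrix.mul_apply, Fin.sum_univ_two, Matrix.one_apply]

lemma Nm_mul_Mm (a : R) : Nm a * Mm a = 1 := by
  ext i j
  fin_cases i <;> fin_cases j <;>
    simp [Mm, Nm, Matrix.mul_apply, Fin.sum_univ_two, Matrix.one_apply]

/-- Product of transfer matrices. -/
def Fm (l : List R) : Matrix (Fin 2) (Fin 2) R := (l.map Mm).prod

/-- Product of inverse transfer matrices, in reverse order. -/
def Gm (l : List R) : Matrix (Fin 2) (Fin 2) R := (l.reverse.map Nm).prod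

lemma Fm_nil : (Fm ([] : List R)) = 1 := rfl

lemma Fm_cons (a : R) (l : List R) : Fm (a :: l) = Mm a * Fm l := by
  simp [Fm]

lemma Fm_append (l : List R) (a : R) : Fm (l ++ [a]) = Fm l * Mm a := by
  simp [Fm]

lemma Gm_nil : (Gm ([] : List R)) = 1 := rfl

lemma Gm_cons (a : R) (l : List R) : Gm (a :: l) = Gm l * Nm a := by
  simp [Gm]

lemma Fm_mul_Gm : ∀ l : List R, Fm l * Gm l = 1 ∧ Gm l * Fm l = 1 := by
  intro l
  induction l with
  | nil => simp [Fm_nil, Gm_nil]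
  | cons a l ih =>
    obtain ⟨h1, h2⟩ := ih
    constructor
    · rw [Fm_cons, Gm_cons, mul_assoc, ← mul_assoc (Fm l), h1, one_mul, Mm_mul_Nm]
    · rw [Fm_cons, Gm_cons, mul_assoc, ← mul_assoc (Nm a), Nm_mul_Mm, one_mul, h2]

lemma Fm_entries : ∀ l : List R, Fm l 0 0 = Pc l ∧ Fm l 0 1 = Pt l := by
  intro l
  induction l using List.reverseRecOn with
  | nil => simp [Fm_nil, Pc, Pr, Pt, Prt, Matrix.one_apply]
  | append_singleton l a ih =>
    obtain ⟨h1, h2⟩ := ih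
    rw [Fm_append, Pc_append, Pt_append]
    constructor
    · simp [Matrix.mul_apply, Fin.sum_univ_two, Mm, h1, h2]
    · simp [Matrix.mul_apply, Fin.sum_univ_two, Mm, h1, h2]

lemma Gm_entries : ∀ l : List R, Gm l 1 0 = Qt l ∧ Gm l 1 1 = Qc l := by
  intro l
  induction l with
  | nil => simp [Gm_nil, Qt, Qc, Matrix.one_apply]
  | cons a l ih =>
    obtain ⟨h1, h2⟩ := ih
    rw [Gm_cons]
    constructor
    · simp [Matrix.mul_apply, Fin.sum_univ_two, Nm, h1, h2, Qt]
    · simp only [Matrix.mul_apply, Fin.sum_univ_two, Qc_cons]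
      simp [Nm, h1, h2, mul_neg, neg_mul, add_comm]

/-- Schur-complement duality: if `!![A,B;C,D]` and `!![E,F;G,H]` are mutually
inverse, then invertibility of `A` implies invertibility of `H`. -/
lemma schur_aux {A B C D F G H : R}
    (h2 : A * F + B * H = 0) (h4 : C * F + D * H = 1)
    (h7 : G * A + H * C = 0) (h8 : G * B + H * D = 1)
    (hA : IsUnit A) : IsUnit H := by
  obtain ⟨u, rfl⟩ := hA
  have e7 : H * C = -(G * (↑u : R)) := eq_neg_of_add_eq_zero_right h7
  have e2 : B * H = -((↑u : R) * F) := eq_neg_of_add_eq_zero_right h2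
  refine isUnit_iff_exists.mpr ⟨D - C * ↑u⁻¹ * B, ?_, ?_⟩
  · calc H * (D - C * ↑u⁻¹ * B)
        = H * D - H * C * ↑u⁻¹ * B := by rw [mul_sub, mul_assoc, mul_assoc, mul_assoc]
      _ = H * D - -(G * ↑u) * ↑u⁻¹ * B := by rw [e7]
      _ = H * D + G * (↑u * ↑u⁻¹) * B := by
          rw [neg_mul, neg_mul, sub_neg_eq_add, mul_assoc G]
      _ = H * D + G * B := by rw [Units.mul_inv, mul_one]
      _ = 1 := by rw [add_comm]; exact h8
  · calc (D - C * ↑u⁻¹ * B) * H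
        = D * H - C * ↑u⁻¹ * (B * H) := by rw [sub_mul, mul_assoc]
      _ = D * H - C * ↑u⁻¹ * -(↑u * F) := by rw [e2]
      _ = D * H + C * (↑u⁻¹ * ↑u) * F := by
          rw [mul_neg, sub_neg_eq_add, ← mul_assoc (C * ↑u⁻¹), mul_assoc C]
      _ = D * H + C * F := by rw [Units.inv_mul, mul_one]
      _ = 1 := by rw [add_comm]; exact h4

end Aux

/-- `Pₘ(A₁,…,Aₘ)` is invertible if and only if `Qₘ(A₁,…,Aₘ)` is invertible. -/
theorem stmt_4 {k : Type*} [Field k] {n : ℕ}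
    (l : List (Matrix (Fin n) (Fin n) k)) :
    IsUnit (Pc l) ↔ IsUnit (Qc l) := by
  obtain ⟨hUV, hVU⟩ := Fm_mul_Gm l
  obtain ⟨hA, -⟩ := Fm_entries l
  obtain ⟨-, hH⟩ := Gm_entries l
  have euv : ∀ i j : Fin 2, Fm l i 0 * Gm l 0 j + Fm l i 1 * Gm l 1 j
      = (1 : Matrix (Fin 2) (Fin 2) (Matrix (Fin n) (Fin n) k)) i j := by
    intro i j
    rw [← Fin.sum_univ_two (f := fun x => Fm l i x * Gm l x j), ← Matrix.mul_apply, hUV]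
  have evu : ∀ i j : Fin 2, Gm l i 0 * Fm l 0 j + Gm l i 1 * Fm l 1 j
      = (1 : Matrix (Fin 2) (Fin 2) (Matrix (Fin n) (Fin n) k)) i j := by
    intro i j
    rw [← Fin.sum_univ_two (f := fun x => Gm l i x * Fm l x j), ← Matrix.mul_apply, hVU]
  have uv00 := euv 0 0; have uv01 := euv 0 1; have uv11 := euv 1 1
  have vu00 := evu 0 0; have vu10 := evu 1 0; have vu11 := evu 1 1
  rw [Matrix.one_apply_eq] at uv00 uv11 vu00 vu11
  rw [Matrix.one_apply_ne (by decide)] at uv01 vu10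
  rw [← hA, ← hH]
  constructor
  · exact fun h => schur_aux uv01 uv11 vu10 vu11 h
  · refine fun h => schur_aux (A := Gm l 1 1) (B := Gm l 1 0) (C := Gm l 0 1)
      (D := Gm l 0 0) (F := Fm l 1 0) (G := Fm l 0 1) (H := Fm l 0 0)
      ?_ ?_ ?_ ?_ h
    · rw [add_comm]; exact vu10
    · rw [add_comm]; exact vu00
    · rw [add_comm]; exact uv01
    · rw [add_comm]; exact uv00
end

section
/- Suppose A_1,...,A_m, A'_1,...,A'_m, u_1, u_2 ∈ Mat_n(k) satisfy u_1·A'_j = A_j·u_2 for all odd j and A_j·u_1 = u_2·A'_j for all even j (1 ≤ j ≤ m). Then, with P defined by P_0 = 1, P_1(a) = a, P_m(A_1,...,A_m) = P_{m-1}(A_1,...,A_{m-1})A_m + P_{m-2}(A_1,...,A_{m-2}): if m is odd then u_1·P_m(A'_1,...,A'_m) = P_m(A_1,...,A_m)·u_2, and if m is even then u_1·P_m(A'_1,...,A'_m) = P_m(A_1,...,A_m)·u_1. -/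
open Matrix

lemma Pc_append_two {R : Type*} [Ring R] (l : List R) (a b : R) :
    Pc (l ++ [a, b]) = Pc (l ++ [a]) * b + Pc l := by
  simp only [Pc, List.reverse_append]
  rfl

lemma ofFn_split {M : Type*} {m : ℕ} (B : Fin (m + 2) → M) :
    List.ofFn B = List.ofFn (fun i : Fin m => B i.castSucc.castSucc) ++
      [B (Fin.last m).castSucc, B (Fin.last (m+1))] := by
  rw [List.ofFn_succ' B, List.ofFn_succ' (fun i : Fin (m+1) => B i.castSucc),
    List.concat_eq_append, List.concat_eq_append, List.append_assoc]
  rfl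

lemma Pc_ofFn_rec {R : Type*} [Ring R] {m : ℕ} (B : Fin (m + 2) → R) :
    Pc (List.ofFn B) = Pc (List.ofFn (fun i : Fin (m+1) => B i.castSucc)) * B (Fin.last (m+1))
      + Pc (List.ofFn (fun i : Fin m => B i.castSucc.castSucc)) := by
  rw [ofFn_split B, Pc_append_two,
    List.ofFn_succ' (fun i : Fin (m+1) => B i.castSucc), List.concat_eq_append]

lemma key {k : Type*} [Field k] {n : ℕ} :
    ∀ m (A A' : Fin m → Matrix (Fin n) (Fin n) k)
      (u1 u2 : Matrix (Fin n) (Fin n) k),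
    (∀ j : Fin m, Odd (j.val + 1) → u1 * A' j = A j * u2) →
    (∀ j : Fin m, Even (j.val + 1) → A j * u1 = u2 * A' j) →
    (Odd m → u1 * Pc (List.ofFn A') = Pc (List.ofFn A) * u2) ∧
    (Even m → u1 * Pc (List.ofFn A') = Pc (List.ofFn A) * u1) := by
  intro m
  induction m using Nat.strong_induction_on with
  | _ m IH =>
    match m with
    | 0 =>
      intro A A' u1 u2 _ _
      refine ⟨fun h => absurd h (by simp), fun _ => ?_⟩
      simp [Pc, Pr]
    | 1 =>
      intro A A' u1 u2 hodd heven
      refine ⟨fun _ => ?_, fun h => absurd h (by simp [Nat.even_iff])⟩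
      simpa [Pc, Pr] using hodd 0 odd_one
    | m + 2 =>
      intro A A' u1 u2 hodd heven
      obtain ⟨ih1o, ih1e⟩ := IH (m+1) (by omega)
        (fun i => A i.castSucc) (fun i => A' i.castSucc) u1 u2
        (fun j hj => hodd j.castSucc (by simpa using hj))
        (fun j hj => heven j.castSucc (by simpa using hj))
      obtain ⟨ih2o, ih2e⟩ := IH m (by omega)
        (fun i => A i.castSucc.castSucc) (fun i => A' i.castSucc.castSucc) u1 u2
        (fun j hj => hodd j.castSucc.castSucc (by simpa using hj))
        (fun j hj => heven j.castSucc.castSucc (by simpa using hj))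
      rw [Pc_ofFn_rec A, Pc_ofFn_rec A']
      constructor
      · intro h
        have hmo : Odd m := by rw [Nat.odd_iff] at h ⊢; omega
        have h1e : Even (m+1) := by rw [Nat.even_iff]; rw [Nat.odd_iff] at h; omega
        have hlast : u1 * A' (Fin.last (m+1)) = A (Fin.last (m+1)) * u2 :=
          hodd (Fin.last (m+1)) (by simpa using h)
        rw [mul_add, add_mul, ← mul_assoc, ih1e h1e, mul_assoc, hlast, ← mul_assoc,
          ih2o hmo]
      · intro h
        have hme : Even m := by rw [Nat.even_iff] at h ⊢; omega
        have h1o : Odd (m+1) := by rw [Nat.odd_iff]; rw [Nat.even_iff] at h; omega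
        have hlast : A (Fin.last (m+1)) * u1 = u2 * A' (Fin.last (m+1)) :=
          heven (Fin.last (m+1)) (by simpa using h)
        rw [mul_add, add_mul, ← mul_assoc, ih1o h1o, mul_assoc, ← hlast, ← mul_assoc,
          ih2e hme]

/-- If `u₁·A'ⱼ = Aⱼ·u₂` for odd `j` and `Aⱼ·u₁ = u₂·A'ⱼ` for even `j`, then
`u₁·Pₘ(A'₁,…,A'ₘ) = Pₘ(A₁,…,Aₘ)·u₂` for `m` odd and
`u₁·Pₘ(A'₁,…,A'ₘ) = Pₘ(A₁,…,Aₘ)·u₁` for `m` even.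
(Here `A j` denotes `A_{j+1}`, so the index `j.val + 1` runs over `1, …, m`.) -/
theorem stmt_6 {k : Type*} [Field k] {n m : ℕ} (hm : 1 ≤ m)
    (A A' : Fin m → Matrix (Fin n) (Fin n) k)
    (u1 u2 : Matrix (Fin n) (Fin n) k)
    (hodd : ∀ j : Fin m, Odd (j.val + 1) → u1 * A' j = A j * u2)
    (heven : ∀ j : Fin m, Even (j.val + 1) → A j * u1 = u2 * A' j) :
    (Odd m → u1 * Pc (List.ofFn A') = Pc (List.ofFn A) * u2) ∧
    (Even m → u1 * Pc (List.ofFn A') = Pc (List.ofFn A) * u1) :=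
  key m A A' u1 u2 hodd heven
end

section
/- Let V = k^n and let φ_1,...,φ_{m+1}: V → V⊕V and ψ: V⊕V → V be linear maps such that ψ∘φ_1 = id, ψ∘φ_{m+1} is an isomorphism, and for each 1 ≤ i ≤ m the images of φ_i and φ_{i+1} are complementary subspaces of V⊕V. Then each φ_i is injective, and moreover, after choosing the normalization φ_1 = (0,id) and ψ = projection onto the second factor, and the inductively chosen bases, for each 2 ≤ j ≤ m+1 there exist unique linear maps A_{j-1}: V → V such that φ_j = φ_{j-2} + φ_{j-1}∘A_{j-1}, where φ_0 := (id, 0). -/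
open LinearMap

section Aux

variable {k : Type*} [Field k] {n : ℕ}

/-- Injectivity from complementarity. -/
lemma aux_inj {f g : (Fin n → k) →ₗ[k] ((Fin n → k) × (Fin n → k))}
    (hc : IsCompl (range f) (range g)) :
    Function.Injective f ∧ Function.Injective g := by
  have hV : Module.finrank k (Fin n → k) = n := Module.finrank_fin_fun k
  have h2 : Module.finrank k ((Fin n → k) × (Fin n → k)) = n + n := by
    rw [Module.finrank_prod, hV]
  have hsum := Submodule.finrank_add_eq_of_isCompl hc
  rw [h2] at hsum
  have hf := f.finrank_range_le
  have hg := g.finrank_range_le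
  rw [hV] at hf hg
  have rf := LinearMap.finrank_range_add_finrank_ker f
  have rg := LinearMap.finrank_range_add_finrank_ker g
  rw [hV] at rf rg
  constructor <;>
  · rw [← LinearMap.ker_eq_bot, ← Submodule.finrank_eq_zero (R := k)]
    omega

/-- Core step: normal form at one stage. -/
lemma aux_step (g h p : (Fin n → k) →ₗ[k] ((Fin n → k) × (Fin n → k)))
    (hg : Function.Injective g) (hh : Function.Injective h) (hp : Function.Injective p)
    (c1 : IsCompl (range g) (range h)) (c2 : IsCompl (range h) (range p)) :
    ∃ e : (Fin n → k) ≃ₗ[k] (Fin n → k), ∃! A : (Fin n → k) →ₗ[k] (Fin n → k),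
      p ∘ₗ e.toLinearMap = g + h ∘ₗ A := by
  set F := g.coprod h with hF
  have hFapp : ∀ x y, F (x, y) = g x + h y := fun _ _ => rfl
  have Finj : Function.Injective F := by
    rw [← LinearMap.ker_eq_bot]
    rw [Submodule.eq_bot_iff]
    rintro ⟨a, b⟩ hab
    rw [LinearMap.mem_ker] at hab
    have hab' : g a + h b = 0 := hab
    have h1 : g a = h (-b) := by rw [map_neg]; linear_combination (norm := module) hab'
    have hga : g a = 0 :=
      Submodule.disjoint_def.1 c1.disjoint (g a) ⟨a, rfl⟩ ⟨-b, h1.symm⟩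
    have hhb : h b = 0 := by rw [hga, zero_add] at hab'; exact hab'
    have ha : a = 0 := hg (by rw [hga, map_zero])
    have hb : b = 0 := hh (by rw [hhb, map_zero])
    simp [ha, hb]
  have Fsurj : Function.Surjective F := by
    rw [← LinearMap.range_eq_top, LinearMap.range_coprod, c1.codisjoint.eq_top]
  let E : ((Fin n → k) × (Fin n → k)) ≃ₗ[k] ((Fin n → k) × (Fin n → k)) :=
    (LinearEquiv.ofBijective F ⟨Finj, Fsurj⟩).symm
  let B : (Fin n → k) →ₗ[k] (Fin n → k) := (LinearMap.fst k _ _) ∘ₗ (E.toLinearMap ∘ₗ p)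
  let C : (Fin n → k) →ₗ[k] (Fin n → k) := (LinearMap.snd k _ _) ∘ₗ (E.toLinearMap ∘ₗ p)
  have key : ∀ v, p v = g (B v) + h (C v) := by
    intro v
    have : F (E (p v)) = p v := (LinearEquiv.ofBijective F ⟨Finj, Fsurj⟩).apply_symm_apply (p v)
    calc p v = F (E (p v)) := this.symm
    _ = g (B v) + h (C v) := by rw [← hFapp]; rfl
  have Binj : Function.Injective B := by
    rw [← LinearMap.ker_eq_bot, Submodule.eq_bot_iff]
    intro v hv
    rw [LinearMap.mem_ker] at hv
    have : p v = h (C v) := by rw [key v, hv, map_zero, zero_add]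
    have hpv : p v = 0 :=
      Submodule.disjoint_def.1 c2.disjoint (p v) ⟨C v, this.symm⟩ ⟨v, rfl⟩
    exact hp (by rw [hpv, map_zero])
  have Bbij : Function.Bijective B := ⟨Binj, LinearMap.injective_iff_surjective.1 Binj⟩
  let eB := LinearEquiv.ofBijective B Bbij
  refine ⟨eB.symm, C ∘ₗ eB.symm.toLinearMap, ?_, ?_⟩
  · refine LinearMap.ext fun v => ?_
    have h1 : B (eB.symm v) = v := eB.apply_symm_apply v
    simp only [LinearMap.add_apply, LinearMap.comp_apply, LinearEquiv.coe_coe]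
    rw [key (eB.symm v), h1]
  · intro A' hA'
    refine LinearMap.ext fun v => ?_
    have h1 : B (eB.symm v) = v := eB.apply_symm_apply v
    have h2 : p (eB.symm v) = g v + h (A' v) := by
      have := congrArg (fun f => f v) hA'
      simpa using this
    have h3 : p (eB.symm v) = g v + h (C (eB.symm v)) := by rw [key (eB.symm v), h1]
    have : h (C (eB.symm v)) = h (A' v) := add_left_cancel (h3.symm.trans h2)
    exact (hh this).symm
end Aux

/-- Normal-form lemma for objects of the microlocal rank `n` sheaf category of the
`(2,m)` torus link.  With `V = kⁿ`, `φ 0, …, φ m` standing for `φ₁, …, φ_{m+1} : V → V ⊕ V`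
and `ψ = pr₂ : V ⊕ V → V`, suppose that `φ₁ = (0, id)` (the normalization), `ψ ∘ φ₁ = id`,
`ψ ∘ φ_{m+1}` is an isomorphism, and the images of consecutive `φᵢ, φ_{i+1}` are
complementary subspaces of `V ⊕ V`.  Then each `φᵢ` is injective, and there are
inductively chosen changes of basis `e : Fin (m+1) → (V ≃ V)` with `e 0 = id` such that
for each `2 ≤ j ≤ m+1` there is a unique `A_{j-1} : V → V` with
`φⱼ ∘ eⱼ = φ_{j-2} ∘ e_{j-2} + (φ_{j-1} ∘ e_{j-1}) ∘ A_{j-1}`, where `φ₀ ∘ e₀ := (id, 0)`. -/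
theorem stmt_9 {k : Type*} [Field k] {n m : ℕ}
    (φ : Fin (m + 1) → ((Fin n → k) →ₗ[k] ((Fin n → k) × (Fin n → k))))
    (hφ1 : φ 0 = LinearMap.inr k (Fin n → k) (Fin n → k))
    (hψφ1 : (LinearMap.snd k (Fin n → k) (Fin n → k)) ∘ₗ φ 0 = LinearMap.id)
    (hlast : Function.Bijective
      ⇑((LinearMap.snd k (Fin n → k) (Fin n → k)) ∘ₗ φ (Fin.last m)))
    (hcompl : ∀ i : Fin m,
      IsCompl (LinearMap.range (φ i.castSucc)) (LinearMap.range (φ i.succ))) :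
    (∀ i : Fin (m + 1), Function.Injective ⇑(φ i)) ∧
    ∃ e : Fin (m + 1) → ((Fin n → k) ≃ₗ[k] (Fin n → k)),
      e 0 = LinearEquiv.refl k (Fin n → k) ∧
      ∀ j : Fin m, ∃! A : (Fin n → k) →ₗ[k] (Fin n → k),
        (φ j.succ) ∘ₗ (e j.succ).toLinearMap =
          (if _ : j.val = 0 then LinearMap.inl k (Fin n → k) (Fin n → k)
            else (φ ⟨j.val - 1, by have := j.isLt; omega⟩) ∘ₗ
              (e ⟨j.val - 1, by have := j.isLt; omega⟩).toLinearMap)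
          + ((φ j.castSucc) ∘ₗ (e j.castSucc).toLinearMap) ∘ₗ A := by
  have inj : ∀ i : Fin (m + 1), Function.Injective ⇑(φ i) := by
    intro i
    rcases Nat.eq_zero_or_pos i.val with h0 | hpos
    · have hi : i = 0 := Fin.ext h0
      rw [hi, hφ1]; exact LinearMap.inr_injective
    · have ht : i.val - 1 < m := by have := i.isLt; omega
      have hsucc : (⟨i.val - 1, ht⟩ : Fin m).succ = i := by
        apply Fin.ext; simp; omega
      have := (aux_inj (hcompl ⟨i.val - 1, ht⟩)).2
      rwa [hsucc] at this
  refine ⟨inj, ?_⟩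
  have main : ∀ t : ℕ, t ≤ m → ∃ e : Fin (m + 1) → ((Fin n → k) ≃ₗ[k] (Fin n → k)),
      e 0 = LinearEquiv.refl k (Fin n → k) ∧
      ∀ j : Fin m, j.val < t → ∃! A : (Fin n → k) →ₗ[k] (Fin n → k),
        (φ j.succ) ∘ₗ (e j.succ).toLinearMap =
          (if _ : j.val = 0 then LinearMap.inl k (Fin n → k) (Fin n → k)
            else (φ ⟨j.val - 1, by have := j.isLt; omega⟩) ∘ₗ
              (e ⟨j.val - 1, by have := j.isLt; omega⟩).toLinearMap)
          + ((φ j.castSucc) ∘ₗ (e j.castSucc).toLinearMap) ∘ₗ A := by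
    intro t
    induction t with
    | zero =>
      exact fun _ => ⟨fun _ => LinearEquiv.refl k _, rfl, fun j hj => absurd hj (by omega)⟩
    | succ t ih =>
      intro hle
      obtain ⟨e, he0, hcond⟩ := ih (by omega)
      have htm : t < m := hle
      set j₀ : Fin m := ⟨t, htm⟩ with hj₀
      have hval : (j₀ : Fin m).val = t := rfl
      set g : (Fin n → k) →ₗ[k] ((Fin n → k) × (Fin n → k)) :=
        (if _ : (j₀ : Fin m).val = 0 then LinearMap.inl k (Fin n → k) (Fin n → k)
            else (φ ⟨j₀.val - 1, by have := j₀.isLt; omega⟩) ∘ₗ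
              (e ⟨j₀.val - 1, by have := j₀.isLt; omega⟩).toLinearMap) with hgdef
      set h : (Fin n → k) →ₗ[k] ((Fin n → k) × (Fin n → k)) :=
        (φ j₀.castSucc) ∘ₗ (e j₀.castSucc).toLinearMap with hhdef
      have hrangeh : range h = range (φ j₀.castSucc) :=
        LinearMap.range_comp_of_range_eq_top _ (LinearEquiv.range _)
      have hh : Function.Injective h := (inj _).comp (e j₀.castSucc).injective
      have hp : Function.Injective (φ j₀.succ) := inj _
      have c2 : IsCompl (range h) (range (φ j₀.succ)) := by
        rw [hrangeh]; exact hcompl j₀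
      have hg : Function.Injective g ∧ IsCompl (range g) (range h) := by
        rcases Nat.eq_zero_or_pos t with ht0 | htpos
        · have hd : (j₀ : Fin m).val = 0 := ht0
          rw [hgdef, dif_pos hd]
          have hc0 : j₀.castSucc = 0 := by apply Fin.ext; simp [hj₀, ht0]
          constructor
          · exact LinearMap.inl_injective
          · rw [hrangeh, hc0, hφ1]
            exact LinearMap.isCompl_range_inl_inr
        · have hd : ¬ (j₀ : Fin m).val = 0 := by omega
          rw [hgdef, dif_neg hd]
          have hrg : range ((φ (⟨j₀.val - 1, by have := j₀.isLt; omega⟩ : Fin (m+1))) ∘ₗ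
              (e ⟨j₀.val - 1, by have := j₀.isLt; omega⟩).toLinearMap)
              = range (φ ⟨j₀.val - 1, by have := j₀.isLt; omega⟩) :=
            LinearMap.range_comp_of_range_eq_top _ (LinearEquiv.range _)
          constructor
          · exact (inj _).comp (e _).injective
          · rw [hrg, hrangeh]
            have hprev : t - 1 < m := by omega
            have h1 : (⟨t - 1, hprev⟩ : Fin m).castSucc
                = (⟨j₀.val - 1, by have := j₀.isLt; omega⟩ : Fin (m+1)) := by
              apply Fin.ext; simp [hj₀]
            have h2 : (⟨t - 1, hprev⟩ : Fin m).succ = j₀.castSucc := by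
              apply Fin.ext; simp [hj₀]; omega
            have := hcompl ⟨t - 1, hprev⟩
            rwa [h1, h2] at this
      obtain ⟨e₀, hA⟩ := aux_step g h (φ j₀.succ) hg.1 hh hp hg.2 c2
      refine ⟨Function.update e j₀.succ e₀, ?_, ?_⟩
      · rw [Function.update_of_ne (Ne.symm (Fin.succ_ne_zero j₀)), he0]
      · intro j hj
        rcases Nat.lt_or_ge j.val t with hjt | hjt
        · have n1 : j.succ ≠ j₀.succ := by
            simp only [ne_eq, Fin.ext_iff, Fin.val_succ]; omega
          have n2 : j.castSucc ≠ j₀.succ := by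
            simp only [ne_eq, Fin.ext_iff, Fin.coe_castSucc, Fin.val_succ]; omega
          have n3 : (⟨j.val - 1, by have := j.isLt; omega⟩ : Fin (m+1)) ≠ j₀.succ := by
            simp only [ne_eq, Fin.ext_iff, Fin.val_succ]; omega
          rw [Function.update_of_ne n1, Function.update_of_ne n2, Function.update_of_ne n3]
          exact hcond j hjt
        · have hjj : j = j₀ := Fin.ext (by omega)
          have n2 : j₀.castSucc ≠ j₀.succ := by
            simp only [ne_eq, Fin.ext_iff, Fin.coe_castSucc, Fin.val_succ]; omega
          have n3 : (⟨j₀.val - 1, by have := j₀.isLt; omega⟩ : Fin (m+1)) ≠ j₀.succ := by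
            simp only [ne_eq, Fin.ext_iff, Fin.val_succ]; omega
          rw [hjj, Function.update_self, Function.update_of_ne n2, Function.update_of_ne n3]
          exact hA
  obtain ⟨e, he0, hcond⟩ := main m le_rfl
  exact ⟨e, he0, fun j => hcond j j.isLt⟩
end

section
/- Let k be a field and fix 2n×2n block matrices Ω_j = (0,0,1,0; 0,0,0,1; 1,0,A'_j,w_j; 0,1,0,A_j) (4×4 blocks of size n) for j = 1,...,m, and similarly Ω'_j with w'_j in place of w_j. Suppose there exist n×n matrices z_1,z_2,z_3,z_4 and u_0,...,u_{m+1} with Θ = (1,z_1,0,z_2; 0,1,0,0; 0,z_3,1,z_4; 0,0,0,1) and Υ_k = (1,u_k; 0,1) such that Θ∘Ω_1 = Ω'_1∘(Υ_1 ⊕ Υ_2) and (Υ_{j-1} ⊕ Υ_j)∘Ω_j = Ω'_j∘(Υ_j ⊕ Υ_{j+1}) for 2 ≤ j ≤ m, and the top compatibility Υ_0·Ψ = Ψ'·Θ with Ψ = Ψ' = (0,0,1,0; 0,0,0,1). Then u_{j+1} = u_{j-1} for 2 ≤ j ≤ m, z_2 = z_3 = 0, z_4 = u_0 = u_1, z_1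 = u_2, and w'_j = w_j + u_j·A_j - A'_j·u_{j+1} for all 1 ≤ j ≤ m. -/
/-!
Multiplying out in `n × n` blocks, each relation is an identity between block matrices whose
entries can be compared one by one. The top relation forces `z₃ = 0` and `z₄ = u₀`, and the
first block of `Θ∘Ω₁` is `(0, z₂; 0, 0)`, so `z₂ = 0`. Then `Θ = Υ_{z₁} ⊕ Υ_{z₄}`, and all
relations have the shape `(Υ_b ⊕ Υ_c)∘Ω = Ω'∘(Υ_{b'} ⊕ Υ_{c'})`, which holds exactly when
`b = c'`, `c = b'` and `w' = w + c·a - a'·c'`.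
-/

open Matrix

/-- The `4n × 4n` block matrix `Ω = (0,0,1,0; 0,0,0,1; 1,0,a',w; 0,1,0,a)`
(blocks of size `n`). -/
def Om {k : Type*} [Field k] {n : ℕ} (a a' w : Matrix (Fin n) (Fin n) k) :
    Matrix ((Fin n ⊕ Fin n) ⊕ (Fin n ⊕ Fin n)) ((Fin n ⊕ Fin n) ⊕ (Fin n ⊕ Fin n)) k :=
  fromBlocks 0 1 1 (fromBlocks a' w 0 a)

/-- The `4n × 4n` block matrix `Θ = (1,z₁,0,z₂; 0,1,0,0; 0,z₃,1,z₄; 0,0,0,1)`. -/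
def Th {k : Type*} [Field k] {n : ℕ} (z1 z2 z3 z4 : Matrix (Fin n) (Fin n) k) :
    Matrix ((Fin n ⊕ Fin n) ⊕ (Fin n ⊕ Fin n)) ((Fin n ⊕ Fin n) ⊕ (Fin n ⊕ Fin n)) k :=
  fromBlocks (fromBlocks 1 z1 0 1) (fromBlocks 0 z2 0 0)
    (fromBlocks 0 z3 0 0) (fromBlocks 1 z4 0 1)

/-- The `2n × 2n` block matrix `Υ = (1, u; 0, 1)`. -/
def Up {k : Type*} [Field k] {n : ℕ} (u : Matrix (Fin n) (Fin n) k) :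
    Matrix (Fin n ⊕ Fin n) (Fin n ⊕ Fin n) k :=
  fromBlocks 1 u 0 1

/-- The `4n × 4n` block diagonal `Υa ⊕ Υb`. -/
def Ups {k : Type*} [Field k] {n : ℕ} (a b : Matrix (Fin n) (Fin n) k) :
    Matrix ((Fin n ⊕ Fin n) ⊕ (Fin n ⊕ Fin n)) ((Fin n ⊕ Fin n) ⊕ (Fin n ⊕ Fin n)) k :=
  fromBlocks (Up a) 0 0 (Up b)

/-- The `2n × 4n` block matrix `Ψ = (0,0,1,0; 0,0,0,1)`. -/
def PsiTop {k : Type*} [Field k] (n : ℕ) :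
    Matrix (Fin n ⊕ Fin n) ((Fin n ⊕ Fin n) ⊕ (Fin n ⊕ Fin n)) k :=
  fromCols 0 1

section

variable {k : Type*} [Field k] {n : ℕ}

theorem Up_inj {u v : Matrix (Fin n) (Fin n) k} : Up u = Up v ↔ u = v := by
  simp [Up, fromBlocks_inj]

theorem Th_zero_zero_eq_Ups (z1 z4 : Matrix (Fin n) (Fin n) k) : Th z1 0 0 z4 = Ups z1 z4 := by
  simp [Th, Ups, Up, fromBlocks_zero]

/- Rectangular products such as `Up u * PsiTop n` elaborate through `CStarMatrix`'s default
`HMul` instance, so `Matrix` lemmas about them apply only up to defeq, not by rewriting. -/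
theorem Up_mul_PsiTop (u : Matrix (Fin n) (Fin n) k) : Up u * PsiTop n = fromCols 0 (Up u) :=
  (mul_fromCols _ _ _).trans (by rw [mul_zero, mul_one])

theorem PsiTop_mul_Th (z1 z2 z3 z4 : Matrix (Fin n) (Fin n) k) :
    PsiTop n * Th z1 z2 z3 z4 = fromCols (fromBlocks 0 z3 0 0) (Up z4) :=
  (fromCols_mul_fromBlocks _ _ _ _ _ _).trans (by simp [Up])

theorem toBlocks₁₁_Th_mul_Om (z1 z2 z3 z4 a a' w : Matrix (Fin n) (Fin n) k) :
    (Th z1 z2 z3 z4 * Om a a' w).toBlocks₁₁ = fromBlocks 0 z2 0 0 := by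
  simp [Th, Om, fromBlocks_multiply]

theorem Ups_mul_Om (a a' w b c : Matrix (Fin n) (Fin n) k) :
    Ups b c * Om a a' w = fromBlocks 0 (Up b) (Up c) (fromBlocks a' (w + c * a) 0 a) := by
  simp [Ups, Om, Up, fromBlocks_multiply]

theorem Om_mul_Ups (a a' w b c : Matrix (Fin n) (Fin n) k) :
    Om a a' w * Ups b c = fromBlocks 0 (Up c) (Up b) (fromBlocks a' (a' * c + w) 0 a) := by
  simp [Ups, Om, Up, fromBlocks_multiply]

theorem Up_mul_PsiTop_eq_PsiTop_mul_Th_iff {u z1 z2 z3 z4 : Matrix (Fin n) (Fin n) k} :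
    Up u * PsiTop n = PsiTop n * Th z1 z2 z3 z4 ↔ z3 = 0 ∧ z4 = u := by
  refine (Eq.congr (Up_mul_PsiTop u) (PsiTop_mul_Th z1 z2 z3 z4)).trans ?_
  rw [fromCols_inj.eq_iff, Up_inj, ← fromBlocks_zero, fromBlocks_inj]
  simp [eq_comm]

theorem eq_zero_of_Th_mul_Om_eq_Om_mul_Ups {z1 z2 z3 z4 a a' w w' b c : Matrix (Fin n) (Fin n) k}
    (h : Th z1 z2 z3 z4 * Om a a' w = Om a a' w' * Ups b c) : z2 = 0 := by
  have h₁₁ := congrArg toBlocks₁₁ h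
  rw [toBlocks₁₁_Th_mul_Om, Om_mul_Ups, toBlocks_fromBlocks₁₁, ← fromBlocks_zero,
    fromBlocks_inj] at h₁₁
  exact h₁₁.2.1

theorem Ups_mul_Om_eq_Om_mul_Ups_iff {a a' w w' b c b' c' : Matrix (Fin n) (Fin n) k} :
    Ups b c * Om a a' w = Om a a' w' * Ups b' c' ↔
      b = c' ∧ c = b' ∧ w' = w + c * a - a' * c' := by
  rw [Ups_mul_Om, Om_mul_Ups]
  simp only [fromBlocks_inj, Up_inj, true_and, and_true]
  rw [eq_sub_iff_add_eq', eq_comm (a := a' * c' + w')]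

end

theorem stmt_15_general {k : Type*} [Field k] {n m : ℕ}
    (A A' w w' u : ℕ → Matrix (Fin n) (Fin n) k)
    (z1 z2 z3 z4 : Matrix (Fin n) (Fin n) k)
    (h1 : Th z1 z2 z3 z4 * Om (A 1) (A' 1) (w 1) =
      Om (A 1) (A' 1) (w' 1) * Ups (u 1) (u 2))
    (h2 : ∀ j, 2 ≤ j → j ≤ m →
      Ups (u (j - 1)) (u j) * Om (A j) (A' j) (w j) =
        Om (A j) (A' j) (w' j) * Ups (u j) (u (j + 1)))
    (htop : Up (u 0) * PsiTop n = PsiTop n * Th z1 z2 z3 z4) :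
    (∀ j, 2 ≤ j → j ≤ m → u (j + 1) = u (j - 1)) ∧
    z2 = 0 ∧ z3 = 0 ∧ z4 = u 0 ∧ u 0 = u 1 ∧ z1 = u 2 ∧
    (∀ j, 1 ≤ j → j ≤ m → w' j = w j + u j * A j - A' j * u (j + 1)) := by
  obtain ⟨rfl, rfl⟩ := Up_mul_PsiTop_eq_PsiTop_mul_Th_iff.mp htop
  obtain rfl := eq_zero_of_Th_mul_Om_eq_Om_mul_Ups h1
  rw [Th_zero_zero_eq_Ups] at h1
  obtain ⟨rfl, hu0, hw1⟩ := Ups_mul_Om_eq_Om_mul_Ups_iff.mp h1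
  have hj (j) (hj2 : 2 ≤ j) (hjm : j ≤ m) := Ups_mul_Om_eq_Om_mul_Ups_iff.mp (h2 j hj2 hjm)
  refine ⟨fun j hj2 hjm => (hj j hj2 hjm).1.symm, rfl, rfl, rfl, hu0, rfl, fun j hj1 hjm => ?_⟩
  obtain rfl | hj2 := hj1.eq_or_lt
  · rwa [← hu0]
  · exact (hj j hj2 hjm).2.2

/-- Isomorphism of extensions in the rank-`n` sheaf category of the `(2,m)` torus link:
if `Θ∘Ω₁ = Ω'₁∘(Υ₁ ⊕ Υ₂)`, `(Υ_{j-1} ⊕ Υ_j)∘Ω_j = Ω'_j∘(Υ_j ⊕ Υ_{j+1})` for `2 ≤ j ≤ m`,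
and `Υ₀·Ψ = Ψ·Θ`, then `u_{j+1} = u_{j-1}` for `2 ≤ j ≤ m`, `z₂ = z₃ = 0`,
`z₄ = u₀ = u₁`, `z₁ = u₂`, and `w'ⱼ = wⱼ + uⱼ·Aⱼ - A'ⱼ·u_{j+1}` for all `1 ≤ j ≤ m`. -/
theorem stmt_15 {k : Type*} [Field k] {n m : ℕ} (hm : 1 ≤ m)
    (A A' w w' u : ℕ → Matrix (Fin n) (Fin n) k)
    (z1 z2 z3 z4 : Matrix (Fin n) (Fin n) k)
    (h1 : Th z1 z2 z3 z4 * Om (A 1) (A' 1) (w 1) =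
      Om (A 1) (A' 1) (w' 1) * Ups (u 1) (u 2))
    (h2 : ∀ j, 2 ≤ j → j ≤ m →
      Ups (u (j - 1)) (u j) * Om (A j) (A' j) (w j) =
        Om (A j) (A' j) (w' j) * Ups (u j) (u (j + 1)))
    (htop : Up (u 0) * PsiTop n = PsiTop n * Th z1 z2 z3 z4) :
    (∀ j, 2 ≤ j → j ≤ m → u (j + 1) = u (j - 1)) ∧
    z2 = 0 ∧ z3 = 0 ∧ z4 = u 0 ∧ u 0 = u 1 ∧ z1 = u 2 ∧
    (∀ j, 1 ≤ j → j ≤ m → w' j = w j + u j * A j - A' j * u (j + 1)) :=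
  stmt_15_general A A' w w' u z1 z2 z3 z4 h1 h2 htop
end
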